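/- arXiv:2006.16961 — 3 statements merged into one kernel-verified Lean document; each statement's English description precedes it below -/
import Mathlib

section
/- Let u ≤ 0 be subharmonic on a domain Ω ⊂ ℝ^m, and suppose B(q_1, 3R), …, B(q_k, 3R) ⊂ Ω is a chain of balls with B(q_j, R) ∩ B(q_{j+1}, R) ≠ ∅ for each j. If sup over B(q_1,R) of u is ≥ −C_0, then the average of |u| over each B(q_j, R) is bounded by a constant depending only on m, k, C_0. -/
open MeasureTheory

/-- Sub-mean-value property over closed balls contained in `s`. -/
def SubmeanOn {E : Type*} [NormedAddCommGroup E] [MeasureSpace E]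
    (u : E → ℝ) (s : Set E) : Prop :=
  ∀ y r, 0 < r → Metric.closedBall y r ⊆ s →
    u y ≤ ⨍ x in Metric.closedBall y r, u x

/-!
By the sub-mean-value inequality, if `B(c, s) ⊆ B̄(y, r) ⊆ Ω` then the average of `-u ≥ 0` over
`B(c, s)` is at most `(r / s)ᵐ (-u y)`, so some point of `B(c, s)` has `-u ≤ (r / s)ᵐ (-u y)`.
For `z ∈ B(qⱼ, R)` the ball `B̄(z, 2R)` lies in `B(qⱼ, 3R) ⊆ Ω`. Two hops of ratio `4`, into the
balls of radius `R / 2` about the midpoints of `qⱼ` and of `qⱼ₊₁` with a common point `p` of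
`B(qⱼ, R)` and `B(qⱼ₊₁, R)`, carry a point of `B(qⱼ, R)` with `-u ≤ A` to a point of `B(qⱼ₊₁, R)`
with `-u ≤ 16ᵐ A`. The chain starts at a point of `B(q₀, R)` with `-u ≤ C₀ + 1` (the supremum need
not be attained), and a good point `z` of `B(qⱼ, R) ⊆ B̄(z, 2R)` bounds the average of `|u| = -u`
over `B(qⱼ, R)` by `2ᵐ (-u z)`.
-/

open Metric Module

namespace Metric

variable {X : Type*} [PseudoMetricSpace X] {a z : X} {R : ℝ}

theorem ball_subset_closedBall_two_mul_of_mem (hz : z ∈ ball a R) :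
    ball a R ⊆ closedBall z (2 * R) :=
  (ball_subset_ball' (by linarith [mem_ball'.1 hz])).trans ball_subset_closedBall

theorem closedBall_two_mul_subset_ball_three_mul_of_mem (hz : z ∈ ball a R) :
    closedBall z (2 * R) ⊆ ball a (3 * R) :=
  closedBall_subset_ball' (by linarith [mem_ball.1 hz])

theorem ball_midpoint_half_subset_inter {E : Type*} [NormedAddCommGroup E] [NormedSpace ℝ E]
    {p a : E} (hp : p ∈ ball a R) :
    ball (midpoint ℝ p a) (R / 2) ⊆ ball p R ∩ ball a R := by
  have hpa : dist p a < R := hp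
  refine Set.subset_inter (ball_subset_ball' ?_) (ball_subset_ball' ?_)
  · rw [dist_midpoint_left, Real.norm_two]; linarith
  · rw [dist_midpoint_right, Real.norm_two]; linarith

end Metric

theorem MeasureTheory.Measure.addHaar_real_closedBall_eq_div_pow_mul {E : Type*}
    [NormedAddCommGroup E] [NormedSpace ℝ E] [MeasurableSpace E] [BorelSpace E]
    [FiniteDimensional ℝ E] (μ : Measure E) [μ.IsAddHaarMeasure] (y c : E) {r s : ℝ}
    (hr : 0 ≤ r) (hs : 0 < s) :
    μ.real (closedBall y r) = (r / s) ^ finrank ℝ E * μ.real (ball c s) := by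
  rw [Measure.addHaar_real_closedBall μ y hr, measureReal_def (s := ball c s),
    Measure.addHaar_ball_of_pos μ c hs, ENNReal.toReal_mul, ENNReal.toReal_ofReal (by positivity),
    ← measureReal_def, div_pow]
  field_simp

namespace SubmeanOn

section

variable {E : Type*} [NormedAddCommGroup E] [MeasureSpace E] {u : E → ℝ} {Ω : Set E}

theorem measureReal_mul_le_setIntegral [ProperSpace E]
    [IsFiniteMeasureOnCompacts (volume : Measure E)] (hsub : SubmeanOn u Ω) {y : E} {r : ℝ}
    (hr : 0 < r) (hy : closedBall y r ⊆ Ω) :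
    volume.real (closedBall y r) * u y ≤ ∫ x in closedBall y r, u x := by
  rw [← measure_smul_setAverage u measure_closedBall_lt_top.ne, smul_eq_mul]
  exact mul_le_mul_of_nonneg_left (hsub y r hr hy) measureReal_nonneg

end

section

variable {E : Type*} [NormedAddCommGroup E] [NormedSpace ℝ E] [FiniteDimensional ℝ E]
  [MeasureSpace E] [BorelSpace E] [(volume : Measure E).IsAddHaarMeasure]
  {u : E → ℝ} {Ω : Set E}

theorem setAverage_neg_le {y c : E} {r s : ℝ} (hsub : SubmeanOn u Ω)
    (hneg : ∀ x ∈ Ω, u x ≤ 0) (hint : IntegrableOn u Ω) (hr : 0 < r) (hs : 0 < s)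
    (hy : closedBall y r ⊆ Ω) (hc : ball c s ⊆ closedBall y r) :
    ⨍ x in ball c s, -u x ≤ (r / s) ^ finrank ℝ E * -u y := by
  have hball_pos : 0 < volume.real (ball c s) :=
    ENNReal.toReal_pos (measure_ball_pos volume c hs).ne' measure_ball_lt_top.ne
  have hmass : ∫ x in ball c s, -u x ≤ ∫ x in closedBall y r, -u x :=
    setIntegral_mono_set (hint.mono_set hy).neg
      (ae_restrict_of_forall_mem measurableSet_closedBall fun x hx ↦
        neg_nonneg.2 (hneg x (hy hx)))
      hc.eventuallyLE
  rw [setAverage_eq, smul_eq_mul, inv_mul_le_iff₀ hball_pos]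
  calc ∫ x in ball c s, -u x
      ≤ ∫ x in closedBall y r, -u x := hmass
    _ ≤ volume.real (closedBall y r) * -u y := by
      rw [integral_neg, mul_neg, neg_le_neg_iff]
      exact hsub.measureReal_mul_le_setIntegral hr hy
    _ = volume.real (ball c s) * ((r / s) ^ finrank ℝ E * -u y) := by
      rw [volume.addHaar_real_closedBall_eq_div_pow_mul y c hr.le hs]
      ring

theorem exists_mem_ball_neg_le {y c : E} {r s : ℝ} (hsub : SubmeanOn u Ω)
    (hneg : ∀ x ∈ Ω, u x ≤ 0) (hint : IntegrableOn u Ω) (hr : 0 < r) (hs : 0 < s)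
    (hy : closedBall y r ⊆ Ω) (hc : ball c s ⊆ closedBall y r) :
    ∃ z ∈ ball c s, -u z ≤ (r / s) ^ finrank ℝ E * -u y := by
  obtain ⟨z, hz, hle⟩ := exists_le_setAverage (measure_ball_pos volume c hs).ne'
    measure_ball_lt_top.ne (hint.mono_set (hc.trans hy)).neg
  exact ⟨z, hz, hle.trans (hsub.setAverage_neg_le hneg hint hr hs hy hc)⟩

theorem exists_mem_ball_neg_le_of_inter_nonempty (hsub : SubmeanOn u Ω)
    (hneg : ∀ x ∈ Ω, u x ≤ 0) (hint : IntegrableOn u Ω) {a b z : E} {R : ℝ} (hR : 0 < R)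
    (ha : ball a (3 * R) ⊆ Ω) (hab : (ball a R ∩ ball b R).Nonempty) (hz : z ∈ ball a R) :
    ∃ z' ∈ ball b R, -u z' ≤ 16 ^ finrank ℝ E * -u z := by
  obtain ⟨p, hpa, hpb⟩ := hab
  have hop : ∀ y c, y ∈ ball a R → ball c (R / 2) ⊆ closedBall y (2 * R) →
      ∃ z' ∈ ball c (R / 2), -u z' ≤ 4 ^ finrank ℝ E * -u y := by
    intro y c hy hc
    have hratio : 2 * R / (R / 2) = 4 := by field_simp; norm_num
    simpa only [hratio] using hsub.exists_mem_ball_neg_le hneg hint (by positivity)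
      (by positivity) ((closedBall_two_mul_subset_ball_three_mul_of_mem hy).trans ha) hc
  have hfirst := ball_midpoint_half_subset_inter hpa
  obtain ⟨z₁, hz₁, hz₁u⟩ := hop z (midpoint ℝ p a) hz
    (hfirst.trans (Set.inter_subset_right.trans (ball_subset_closedBall_two_mul_of_mem hz)))
  have hsecond := ball_midpoint_half_subset_inter hpb
  obtain ⟨z₂, hz₂, hz₂u⟩ := hop z₁ (midpoint ℝ p b) (hfirst hz₁).2
    (hsecond.trans (Set.inter_subset_left.trans
      (ball_subset_closedBall_two_mul_of_mem (hfirst hz₁).1)))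
  refine ⟨z₂, (hsecond hz₂).2, ?_⟩
  calc -u z₂ ≤ 4 ^ finrank ℝ E * (4 ^ finrank ℝ E * -u z) :=
        hz₂u.trans (mul_le_mul_of_nonneg_left hz₁u (by positivity))
    _ = 16 ^ finrank ℝ E * -u z := by rw [← mul_assoc, ← mul_pow]; norm_num

theorem exists_mem_ball_neg_le_of_chain (hsub : SubmeanOn u Ω) (hneg : ∀ x ∈ Ω, u x ≤ 0)
    (hint : IntegrableOn u Ω) {k : ℕ} {q : Fin (k + 1) → E} {R : ℝ} (hR : 0 < R)
    (hq : ∀ j, ball (q j) (3 * R) ⊆ Ω)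
    (hchain : ∀ j : Fin k, (ball (q j.castSucc) R ∩ ball (q j.succ) R).Nonempty)
    {z₀ : E} (hz₀ : z₀ ∈ ball (q 0) R) (j : Fin (k + 1)) :
    ∃ z ∈ ball (q j) R, -u z ≤ (16 ^ finrank ℝ E) ^ (j : ℕ) * -u z₀ := by
  induction j using Fin.induction with
  | zero => exact ⟨z₀, hz₀, by simp⟩
  | succ i ih =>
    obtain ⟨z, hz, hzu⟩ := ih
    obtain ⟨z', hz', hz'u⟩ :=
      hsub.exists_mem_ball_neg_le_of_inter_nonempty hneg hint hR (hq _) (hchain i) hz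
    refine ⟨z', hz', hz'u.trans ?_⟩
    rw [Fin.val_succ, pow_succ', mul_assoc]
    gcongr
    exact hzu

theorem setAverage_abs_ball_le (hsub : SubmeanOn u Ω) (hneg : ∀ x ∈ Ω, u x ≤ 0)
    (hint : IntegrableOn u Ω) {a z : E} {R : ℝ} (hR : 0 < R) (ha : ball a (3 * R) ⊆ Ω)
    (hz : z ∈ ball a R) :
    ⨍ x in ball a R, |u x| ≤ 2 ^ finrank ℝ E * -u z := by
  have hz₂ : closedBall z (2 * R) ⊆ Ω :=
    (closedBall_two_mul_subset_ball_three_mul_of_mem hz).trans ha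
  have haz := ball_subset_closedBall_two_mul_of_mem hz
  have hratio : 2 * R / R = 2 := by field_simp
  rw [setAverage_congr_fun measurableSet_ball
    (ae_of_all _ fun x hx ↦ abs_of_nonpos (hneg x (hz₂ (haz hx))))]
  simpa only [hratio] using hsub.setAverage_neg_le hneg hint (by positivity) hR hz₂ haz

end

end SubmeanOn

/-- along a chain of overlapping balls whose triples lie in the domain,
an almost-maximum bound `sup_{B(q_1,R)} u ≥ -C₀` for a nonpositive subharmonic `u`
propagates to a uniform `L¹`-average bound on every ball of the chain, with a constant
depending only on the dimension `m`, the chain length `k` and `C₀`. -/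
theorem chain_of_balls_L1_bound (m k : ℕ) (C₀ : ℝ) :
    ∃ C : ℝ, ∀ (Ω : Set (EuclideanSpace ℝ (Fin m)))
      (u : EuclideanSpace ℝ (Fin m) → ℝ)
      (q : Fin (k + 1) → EuclideanSpace ℝ (Fin m)) (R : ℝ),
      0 < R →
      SubmeanOn u Ω →
      (∀ x ∈ Ω, u x ≤ 0) →
      IntegrableOn u Ω →
      (∀ j, Metric.ball (q j) (3 * R) ⊆ Ω) →
      (∀ j : Fin k, (Metric.ball (q j.castSucc) R ∩ Metric.ball (q j.succ) R).Nonempty) →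
      -C₀ ≤ ⨆ y : Metric.ball (q 0) R, u (y : EuclideanSpace ℝ (Fin m)) →
      ∀ j, ⨍ x in Metric.ball (q j) R, |u x| ≤ C := by
  refine ⟨2 ^ m * ((16 ^ m) ^ k * (C₀ + 1)), ?_⟩
  intro Ω u q R hR hsub hneg hint hq hchain hsup j
  obtain ⟨z₀, hz₀, hz₀u⟩ : ∃ z₀ ∈ ball (q 0) R, -u z₀ ≤ C₀ + 1 := by
    have := (nonempty_ball (x := q 0).2 hR).to_subtype
    obtain ⟨⟨z₀, hz₀⟩, hlt⟩ :=
      exists_lt_of_lt_ciSup (hsup.trans_lt' (sub_one_lt (-C₀)))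
    exact ⟨z₀, hz₀, by linarith⟩
  have hC₀ : 0 ≤ C₀ + 1 :=
    (neg_nonneg.2 (hneg z₀ (hq 0 (ball_subset_ball (by linarith) hz₀)))).trans hz₀u
  obtain ⟨z, hz, hzu⟩ := hsub.exists_mem_ball_neg_le_of_chain hneg hint hR hq hchain hz₀ j
  have havg := hsub.setAverage_abs_ball_le hneg hint hR (hq j) hz
  rw [finrank_euclideanSpace_fin] at hzu havg
  calc ⨍ x in ball (q j) R, |u x|
      ≤ 2 ^ m * -u z := havg
    _ ≤ 2 ^ m * ((16 ^ m) ^ (j : ℕ) * (C₀ + 1)) := by gcongr; exact hzu.trans (by gcongr)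
    _ ≤ 2 ^ m * ((16 ^ m) ^ k * (C₀ + 1)) := by
        gcongr
        · exact one_le_pow₀ (by norm_num)
        · exact Nat.lt_succ_iff.1 j.isLt
end

section
/- Fix δ ∈ (0,1), n ≥ 1, and constants C₁', C₂' > 0 with C₄' > C₂'/C₁'. For each t with 0 < |t| < δ^{n} there exists a C² function Φ = Φ_t : ℝ → ℝ which is convex, non-increasing, non-negative, satisfies Φ(x) = 0 for x ≥ log δ, Φ'(x) < 0 for x < log δ, satisfies the differential inequality −(d/dx) log|Φ'(x)| ≥ C₄' max{e^x, e^{−x/n}|t|^{2/n}} for x < log δ, and satisfies a uniform bound |Φ'(x)| ≤ C for all x ≥ 2 log|t|, with C independent of t. -/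
/-!
Take `Φ(x) = ∫_x^L |Φ'|` with `L = log δ` and `|Φ'(x)| = exp(-1/(L - x)) · exp(∫_x^L m)`, where
`m(s) = C₄' max{eˢ, e^{-s/n} t^{2/n}}` is the prescribed weight. Below `L`,
`-(log |Φ'|)' = (L - x)⁻² + m(x) ≥ m(x)`; the flat factor `exp(-1/(L - x))` glues `Φ'` smoothly
to `0` at `L`, and `|Φ'|` is antitone since `m ≥ 0`, so `Φ` is convex. Finally
`|Φ'(x)| ≤ exp(∫_x^L m)`, and for `x ≥ 2 log t` the integral is at most `C₄' (e^L + n)` because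
`∫_x^L e^{-s/n} t^{2/n} ds ≤ n e^{-x/n} t^{2/n} ≤ n`.
-/

open Real Set intervalIntegral

lemma expNegInvGlue_le_one (x : ℝ) : expNegInvGlue x ≤ 1 := by
  unfold expNegInvGlue
  split_ifs
  · exact zero_le_one
  · exact exp_le_one_iff.2 (neg_nonpos.2 (inv_nonneg.2 (by linarith)))

lemma log_expNegInvGlue {x : ℝ} (hx : 0 < x) : log (expNegInvGlue x) = -x⁻¹ := by
  rw [expNegInvGlue, if_neg hx.not_ge, log_exp]

section IntegralLeft

variable {f : ℝ → ℝ}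

lemma Continuous.hasDerivAt_integral_left (hf : Continuous f) (b x : ℝ) :
    HasDerivAt (fun u => ∫ s in u..b, f s) (-f x) x :=
  integral_hasDerivAt_left (hf.intervalIntegrable x b) (hf.stronglyMeasurableAtFilter _ _)
    hf.continuousAt

lemma Continuous.deriv_integral_left (hf : Continuous f) (b : ℝ) :
    deriv (fun u => ∫ s in u..b, f s) = fun x => -f x :=
  funext fun x => (hf.hasDerivAt_integral_left b x).deriv

lemma ContDiff.integral_left {k : ℕ} (hf : ContDiff ℝ k f) (b : ℝ) :
    ContDiff ℝ (k + 1) fun u => ∫ s in u..b, f s := by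
  refine contDiff_succ_iff_deriv.2 ⟨fun x => (hf.continuous.hasDerivAt_integral_left b x)
    |>.differentiableAt, by simp, ?_⟩
  rw [hf.continuous.deriv_integral_left]
  exact hf.neg

lemma antitone_integral_left (hf : Continuous f) (hf0 : ∀ x, 0 ≤ f x) (b : ℝ) :
    Antitone fun u => ∫ s in u..b, f s :=
  antitone_of_deriv_nonpos (fun x => (hf.hasDerivAt_integral_left b x).differentiableAt)
    fun x => by rw [hf.deriv_integral_left]; exact neg_nonpos.2 (hf0 x)

end IntegralLeft

noncomputable section

def profileSlope (L : ℝ) (m : ℝ → ℝ) (x : ℝ) : ℝ :=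
  expNegInvGlue (L - x) * exp (∫ s in x..L, m s)

def profile (L : ℝ) (m : ℝ → ℝ) (x : ℝ) : ℝ :=
  ∫ s in x..L, profileSlope L m s

end

section Profile

variable {L : ℝ} {m : ℝ → ℝ} {x : ℝ}

lemma profileSlope_nonneg : 0 ≤ profileSlope L m x :=
  mul_nonneg (expNegInvGlue.nonneg _) (exp_pos _).le

lemma profileSlope_pos (hx : x < L) : 0 < profileSlope L m x :=
  mul_pos (expNegInvGlue.pos_of_pos (sub_pos.2 hx)) (exp_pos _)

lemma profileSlope_eq_zero (hx : L ≤ x) : profileSlope L m x = 0 := by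
  rw [profileSlope, expNegInvGlue.zero_of_nonpos (sub_nonpos.2 hx), zero_mul]

lemma profileSlope_le_exp_integral : profileSlope L m x ≤ exp (∫ s in x..L, m s) :=
  mul_le_of_le_one_left (exp_pos _).le (expNegInvGlue_le_one _)

lemma contDiff_profileSlope (hm : Continuous m) : ContDiff ℝ 1 (profileSlope L m) := by
  have hM : ContDiff ℝ 1 fun u => ∫ s in u..L, m s := by
    simpa using (contDiff_zero.2 hm).integral_left L
  exact (expNegInvGlue.contDiff.comp (contDiff_const.sub contDiff_id)).mul
    (contDiff_exp.comp hM)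

lemma antitone_profileSlope (hm : Continuous m) (hm0 : ∀ x, 0 ≤ m x) :
    Antitone (profileSlope L m) := fun _ _ hab =>
  mul_le_mul (expNegInvGlue.monotone (sub_le_sub_left hab L))
    (exp_le_exp.2 (antitone_integral_left hm hm0 L hab)) (exp_pos _).le (expNegInvGlue.nonneg _)

lemma hasDerivAt_log_profileSlope (hm : Continuous m) (hx : x < L) :
    HasDerivAt (fun y => log (profileSlope L m y)) (-((L - x) ^ 2)⁻¹ - m x) x := by
  have hlog : (fun y => -(L - y)⁻¹ + ∫ s in y..L, m s) =ᶠ[nhds x]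
      fun y => log (profileSlope L m y) := by
    filter_upwards [Iio_mem_nhds hx] with y hy
    rw [profileSlope, log_mul (expNegInvGlue.pos_of_pos (sub_pos.2 hy)).ne' (exp_pos _).ne',
      log_expNegInvGlue (sub_pos.2 hy), log_exp]
  have hinv := (((hasDerivAt_id x).const_sub L).inv (sub_pos.2 hx).ne').neg
  refine ((hinv.add (hm.hasDerivAt_integral_left L x)).congr_of_eventuallyEq hlog.symm).congr_deriv ?_
  simp only [id_eq, neg_neg]
  ring

lemma hasDerivAt_profile (hm : Continuous m) (x : ℝ) :
    HasDerivAt (profile L m) (-profileSlope L m x) x :=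
  (contDiff_profileSlope hm).continuous.hasDerivAt_integral_left L x

lemma deriv_profile (hm : Continuous m) : deriv (profile L m) = fun x => -profileSlope L m x :=
  (contDiff_profileSlope hm).continuous.deriv_integral_left L

lemma abs_deriv_profile (hm : Continuous m) : |deriv (profile L m) x| = profileSlope L m x := by
  rw [deriv_profile hm, abs_neg, abs_of_nonneg profileSlope_nonneg]

lemma contDiff_profile (hm : Continuous m) : ContDiff ℝ 2 (profile L m) :=
  (contDiff_profileSlope hm).integral_left L

lemma convexOn_profile (hm : Continuous m) (hm0 : ∀ x, 0 ≤ m x) :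
    ConvexOn ℝ univ (profile L m) :=
  Monotone.convexOn_univ_of_deriv (fun x => (hasDerivAt_profile hm x).differentiableAt)
    (by rw [deriv_profile hm]; exact fun _ _ hab => neg_le_neg (antitone_profileSlope hm hm0 hab))

lemma antitone_profile (hm : Continuous m) : Antitone (profile L m) :=
  antitone_integral_left (contDiff_profileSlope hm).continuous (fun _ => profileSlope_nonneg) L

lemma profile_eq_zero (hx : L ≤ x) : profile L m x = 0 := by
  have hzero : EqOn (profileSlope L m) 0 (uIcc x L) := fun _ hs =>
    profileSlope_eq_zero (uIcc_of_ge hx ▸ hs).1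
  rw [profile, integral_congr hzero]
  simp

lemma profile_nonneg : 0 ≤ profile L m x := by
  rcases le_total L x with hLx | hxL
  · exact (profile_eq_zero hLx).ge
  · exact integral_nonneg hxL fun _ _ => profileSlope_nonneg

lemma le_neg_deriv_log_abs_deriv_profile (hm : Continuous m) (hx : x < L) :
    m x ≤ -deriv (fun y => log |deriv (profile L m) y|) x := by
  simp only [abs_deriv_profile hm]
  rw [(hasDerivAt_log_profileSlope hm hx).deriv]
  linarith [inv_nonneg.2 (sq_nonneg (L - x))]

end Profile

lemma integral_exp_neg_div {n : ℝ} (hn : n ≠ 0) (a b : ℝ) :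
    ∫ s in a..b, exp (-s / n) = n * (exp (-a / n) - exp (-b / n)) := by
  have hF : ∀ s, HasDerivAt (fun s => -n * exp (-s / n)) (exp (-s / n)) s := fun s =>
    (((hasDerivAt_neg s).div_const n).exp.const_mul (-n)).congr_deriv (by field_simp)
  rw [integral_eq_sub_of_hasDerivAt (fun s _ => hF s)
    ((by fun_prop : Continuous fun s => exp (-s / n)).intervalIntegrable a b)]
  ring

lemma exp_neg_div_mul_rpow_le_one {n t x : ℝ} (hn : 0 < n) (ht : 0 < t) (hx : 2 * log t ≤ x) :
    exp (-x / n) * t ^ (2 / n) ≤ 1 := by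
  rw [rpow_def_of_pos ht, ← exp_add, exp_le_one_iff,
    show -x / n + log t * (2 / n) = (2 * log t - x) / n by ring]
  exact div_nonpos_of_nonpos_of_nonneg (by linarith) hn.le

lemma integral_max_exp_le {n t x L : ℝ} (hn : 0 < n) (ht : 0 < t) (hx : 2 * log t ≤ x)
    (hxL : x ≤ L) : ∫ s in x..L, max (exp s) (exp (-s / n) * t ^ (2 / n)) ≤ exp L + n := by
  have hτ : 0 < t ^ (2 / n) := rpow_pos_of_pos ht _
  have hL : 0 ≤ n * exp (-L / n) * t ^ (2 / n) := by positivity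
  calc ∫ s in x..L, max (exp s) (exp (-s / n) * t ^ (2 / n))
      ≤ ∫ s in x..L, (exp s + exp (-s / n) * t ^ (2 / n)) :=
        integral_mono_on hxL ((by fun_prop : Continuous _).intervalIntegrable _ _)
          ((by fun_prop : Continuous _).intervalIntegrable _ _)
          fun s _ => max_le_add_of_nonneg (exp_pos s).le (by positivity)
    _ = exp L - exp x + n * (exp (-x / n) - exp (-L / n)) * t ^ (2 / n) := by
        rw [integral_add (continuous_exp.intervalIntegrable _ _)
          ((by fun_prop : Continuous _).intervalIntegrable _ _), integral_exp,
          integral_mul_const, integral_exp_neg_div hn.ne']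
    _ ≤ exp L + n * (exp (-x / n) * t ^ (2 / n)) := by linarith [exp_pos x]
    _ ≤ exp L + n := by
        nlinarith [exp_neg_div_mul_rpow_le_one hn ht hx]

theorem good_profile_function_exists_general (n : ℕ) (hn : 1 ≤ n) (δ C₁' C₂' C₄' : ℝ)
    (hC₁ : 0 < C₁') (hC₂ : 0 < C₂')
    (hC₄ : C₂' / C₁' < C₄') :
    ∃ C : ℝ, ∀ t : ℝ, 0 < t → t < δ ^ n →
      ∃ Φ : ℝ → ℝ,
        ContDiff ℝ 2 Φ ∧
        ConvexOn ℝ Set.univ Φ ∧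
        Antitone Φ ∧
        (∀ x, 0 ≤ Φ x) ∧
        (∀ x, Real.log δ ≤ x → Φ x = 0) ∧
        (∀ x, x < Real.log δ → deriv Φ x < 0) ∧
        (∀ x, x < Real.log δ →
          C₄' * max (Real.exp x) (Real.exp (-x / (n : ℝ)) * t ^ ((2 : ℝ) / (n : ℝ))) ≤
            -(deriv (fun y => Real.log |deriv Φ y|) x)) ∧
        (∀ x, 2 * Real.log t ≤ x → |deriv Φ x| ≤ C) := by
  have hC₄pos : 0 < C₄' := (div_pos hC₂ hC₁).trans hC₄
  have hnpos : (0 : ℝ) < n := by exact_mod_cast hn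
  refine ⟨exp (C₄' * (exp (log δ) + n)), fun t ht _ => ?_⟩
  set m : ℝ → ℝ := fun s => C₄' * max (exp s) (exp (-s / n) * t ^ ((2 : ℝ) / n))
  have hm : Continuous m := by fun_prop
  have hm0 : ∀ s, 0 ≤ m s := fun s => mul_nonneg hC₄pos.le ((exp_pos s).le.trans (le_max_left _ _))
  refine ⟨profile (log δ) m, contDiff_profile hm, convexOn_profile hm hm0, antitone_profile hm,
    fun _ => profile_nonneg, fun _ => profile_eq_zero, fun x hx => ?_,
    fun _ => le_neg_deriv_log_abs_deriv_profile hm, fun x hx => ?_⟩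
  · rw [deriv_profile hm]
    exact neg_neg_of_pos (profileSlope_pos hx)
  · rw [abs_deriv_profile hm]
    rcases le_or_gt (log δ) x with hδx | hxδ
    · rw [profileSlope_eq_zero hδx]
      positivity
    calc profileSlope (log δ) m x ≤ exp (∫ s in x..log δ, m s) := profileSlope_le_exp_integral
      _ ≤ exp (C₄' * (exp (log δ) + n)) := by
        rw [integral_const_mul]
        gcongr
        exact integral_max_exp_le hnpos ht hx hxδ.le

/-- existence of the good profile function `Φ_t`: a convex, non-increasing,
non-negative `C²` function vanishing for `x ≥ log δ`, with `Φ' < 0` below `log δ`,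
satisfying `-(d/dx) log|Φ'| ≥ C₄' max{e^x, e^{-x/n} |t|^{2/n}}`, and with `|Φ'|`
bounded on `[2 log|t|, ∞)` by a constant independent of `t`.  Here `t` stands for
the modulus `|t| ∈ (0, δⁿ)`. -/
theorem good_profile_function_exists (n : ℕ) (hn : 1 ≤ n) (δ C₁' C₂' C₄' : ℝ)
    (hδ : 0 < δ) (hδ1 : δ < 1) (hC₁ : 0 < C₁') (hC₂ : 0 < C₂')
    (hC₄ : C₂' / C₁' < C₄') :
    ∃ C : ℝ, ∀ t : ℝ, 0 < t → t < δ ^ n →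
      ∃ Φ : ℝ → ℝ,
        ContDiff ℝ 2 Φ ∧
        ConvexOn ℝ Set.univ Φ ∧
        Antitone Φ ∧
        (∀ x, 0 ≤ Φ x) ∧
        (∀ x, Real.log δ ≤ x → Φ x = 0) ∧
        (∀ x, x < Real.log δ → deriv Φ x < 0) ∧
        (∀ x, x < Real.log δ →
          C₄' * max (Real.exp x) (Real.exp (-x / (n : ℝ)) * t ^ ((2 : ℝ) / (n : ℝ))) ≤
            -(deriv (fun y => Real.log |deriv Φ y|) x)) ∧
        (∀ x, 2 * Real.log t ≤ x → |deriv Φ x| ≤ C) :=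
  good_profile_function_exists_general n hn δ C₁' C₂' C₄' hC₁ hC₂ hC₄
end

section
/- Let a_1, …, a_p ≥ 0 with at least one a_i = 0, and let L = |log|t|| for 0 < |t| < 1. Then ∫_{Δ_L} exp(−2 Σ_i a_i y_i) dσ ≤ C(a) L^{m}, where Δ_L = {y ∈ ℝ^p_{≥0} : y_1 + ⋯ + y_p = L} with its (p−1)-dimensional Lebesgue measure dσ, and m = #{i : a_i = 0} − 1, with C(a) independent of L ≥ 1. -/
/-!
Write a point of the simplex `{x ∈ ℝ^{q+1}_{≥0} | ∑ x = L}` as `(t, x')` with `x'` in the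
simplex of size `L - t`. By Tonelli, the integral `J_a(L)` (`simplexLIntegral a L`) of
`exp (-∑ aᵢ xᵢ)` over the simplex satisfies the convolution recursion
`J_{(b, a)}(L) = ∫₀ᴸ e^{-bt} J_a(L - t) dt`. Induction on the dimension then gives
`J_a(L) ≤ C L^{k-1} e^{-μL}`, where `μ = min aᵢ` is attained `k` times: convolving `s^m e^{-μs}`
with `e^{-bt}` raises the power of `L` by one when `b = μ`, costs only a factor `(b - μ)⁻¹` when
`b > μ`, and when `b < μ` yields `e^{-bL}` times a partial integral of
`∫₀^∞ s^m e^{-(μ-b)s} ds < ∞`. The theorem is the case `μ = 0`.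
-/

open MeasureTheory Set Real
open scoped ENNReal Nat

theorem Fin.iInf_cons {α : Type*} [ConditionallyCompleteLinearOrder α] {n : ℕ} (b : α)
    (a : Fin (n + 1) → α) : ⨅ i, (Fin.cons b a : Fin (n + 2) → α) i = min b (⨅ i, a i) := by
  rw [iInf, iInf, Fin.range_cons, csInf_insert (finite_range a).bddBelow (range_nonempty a)]

theorem Fin.ncard_setOf_cons_eq {α : Type*} [DecidableEq α] {n : ℕ} (b x : α) (a : Fin n → α) :
    {i | (Fin.cons b a : Fin (n + 1) → α) i = x}.ncard =
      (if b = x then 1 else 0) + {i | a i = x}.ncard := by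
  simp only [Set.ncard_eq_toFinset_card', Set.toFinset_ofPred, Finset.card_filter,
    Fin.sum_univ_succ, Fin.cons_zero, Fin.cons_succ]

section MinMultiplicity

variable {α : Type*} [ConditionallyCompleteLinearOrder α]

noncomputable def minMultiplicity {ι : Type*} (a : ι → α) : ℕ := {i | a i = ⨅ j, a j}.ncard

theorem minMultiplicity_pos {ι : Type*} [Finite ι] [Nonempty ι] (a : ι → α) :
    0 < minMultiplicity a := by
  obtain ⟨i, hi⟩ := exists_eq_ciInf_of_finite (f := a)
  exact (Set.ncard_pos (toFinite _)).2 ⟨i, hi⟩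

theorem minMultiplicity_cons {n : ℕ} (b : α) (a : Fin (n + 1) → α) :
    minMultiplicity (Fin.cons b a : Fin (n + 2) → α) =
      (if b ≤ ⨅ i, a i then 1 else 0) + (if ⨅ i, a i ≤ b then minMultiplicity a else 0) := by
  classical
  rw [minMultiplicity, Fin.iInf_cons, Fin.ncard_setOf_cons_eq]
  rcases lt_trichotomy b (⨅ i, a i) with h | h | h
  · have hempty : {i | a i = b} = ∅ := eq_empty_of_forall_notMem fun i (hi : a i = b) =>
      (ciInf_le (finite_range a).bddBelow i).not_gt (hi ▸ h)
    simp [h.le, h.not_ge, hempty]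
  · simp [h, minMultiplicity]
  · simp [h.le, h.not_ge, h.ne', minMultiplicity]

end MinMultiplicity

theorem integral_exp_conv_le_of_eq {c L : ℝ} (m : ℕ) (hL : 0 ≤ L) :
    ∫ t in 0..L, exp (-(c * t)) * ((L - t) ^ m * exp (-(c * (L - t)))) ≤
      L ^ (m + 1) * exp (-(c * L)) := by
  calc _ ≤ ∫ _ in 0..L, L ^ m * exp (-(c * L)) := by
        refine intervalIntegral.integral_mono_on hL
          ((by fun_prop : Continuous _).intervalIntegrable _ _) intervalIntegrable_const
          fun t ht => ?_
        rw [mul_left_comm, ← exp_add, show -(c * t) + -(c * (L - t)) = -(c * L) by ring]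
        gcongr
        · linarith [ht.2]
        · linarith [ht.1]
    _ = _ := by rw [intervalIntegral.integral_const, smul_eq_mul]; ring

theorem integral_exp_conv_le_of_lt {b c L : ℝ} (m : ℕ) (hL : 0 ≤ L) (hcb : c < b) :
    ∫ t in 0..L, exp (-(b * t)) * ((L - t) ^ m * exp (-(c * (L - t)))) ≤
      (b - c)⁻¹ * (L ^ m * exp (-(c * L))) := by
  -- `t ^ 0`: the tail is bounded by the case `k = 0` of `intervalIntegral_pow_mul_exp_neg_le`
  calc _ ≤ ∫ t in 0..L, L ^ m * exp (-(c * L)) * (t ^ 0 * exp (-((b - c) * t))) := by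
        refine intervalIntegral.integral_mono_on hL
          ((by fun_prop : Continuous _).intervalIntegrable _ _)
          ((by fun_prop : Continuous _).intervalIntegrable _ _) fun t ht => ?_
        rw [pow_zero, one_mul, mul_left_comm, mul_assoc, ← exp_add, ← exp_add,
          show -(b * t) + -(c * (L - t)) = -(c * L) + -((b - c) * t) by ring]
        gcongr
        · linarith [ht.2]
        · linarith [ht.1]
    _ = L ^ m * exp (-(c * L)) * ∫ t in 0..L, t ^ 0 * exp (-((b - c) * t)) :=
        intervalIntegral.integral_const_mul _ _
    _ ≤ L ^ m * exp (-(c * L)) * ((0 : ℕ) ! / (b - c) ^ (0 + 1)) := by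
        gcongr
        exact intervalIntegral_pow_mul_exp_neg_le hL (sub_pos.2 hcb)
    _ = _ := by simp [mul_comm]

theorem integral_exp_conv_le_of_gt {b c L : ℝ} (m : ℕ) (hL : 0 ≤ L) (hbc : b < c) :
    ∫ t in 0..L, exp (-(b * t)) * ((L - t) ^ m * exp (-(c * (L - t)))) ≤
      m ! / (c - b) ^ (m + 1) * exp (-(b * L)) := by
  calc _ = ∫ s in 0..L, exp (-(b * (L - s))) * (s ^ m * exp (-(c * s))) := by
        simpa using intervalIntegral.integral_comp_sub_left
          (fun s => exp (-(b * (L - s))) * (s ^ m * exp (-(c * s)))) (a := 0) (b := L) L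
    _ = exp (-(b * L)) * ∫ s in 0..L, s ^ m * exp (-((c - b) * s)) := by
        rw [← intervalIntegral.integral_const_mul]
        congr 1 with s
        rw [mul_left_comm, mul_left_comm _ (s ^ m), ← exp_add, ← exp_add]
        ring_nf
    _ ≤ exp (-(b * L)) * (m ! / (c - b) ^ (m + 1)) := by
        gcongr
        exact intervalIntegral_pow_mul_exp_neg_le hL (sub_pos.2 hbc)
    _ = _ := mul_comm _ _

theorem lintegral_exp_conv_le {g : ℝ → ℝ≥0∞} {b c C L : ℝ} {m : ℕ} (hC : 0 ≤ C) (hL : 0 ≤ L)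
    (hg : ∀ s, 0 ≤ s → g s ≤ ENNReal.ofReal (C * (s ^ m * exp (-(c * s))))) :
    ∫⁻ t in Icc 0 L, ENNReal.ofReal (exp (-(b * t))) * g (L - t) ≤
      ENNReal.ofReal (C * ∫ t in 0..L, exp (-(b * t)) * ((L - t) ^ m * exp (-(c * (L - t))))) := by
  set f : ℝ → ℝ := fun t => C * (exp (-(b * t)) * ((L - t) ^ m * exp (-(c * (L - t)))))
  have hf : Continuous f := by fun_prop
  have hf_nonneg : ∀ t ∈ Icc 0 L, 0 ≤ f t := fun t ht =>
    mul_nonneg hC (mul_nonneg (exp_nonneg _)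
      (mul_nonneg (pow_nonneg (sub_nonneg.2 ht.2) _) (exp_nonneg _)))
  calc _ ≤ ∫⁻ t in Icc 0 L, ENNReal.ofReal (f t) := by
        refine setLIntegral_mono hf.measurable.ennreal_ofReal fun t ht => ?_
        calc _ ≤ ENNReal.ofReal (exp (-(b * t))) *
              ENNReal.ofReal (C * ((L - t) ^ m * exp (-(c * (L - t))))) := by
              gcongr
              exact hg _ (sub_nonneg.2 ht.2)
          _ = ENNReal.ofReal (f t) := by
              rw [← ENNReal.ofReal_mul (exp_nonneg _), mul_left_comm]
    _ = ENNReal.ofReal (∫ t in Icc 0 L, f t) :=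
        (ofReal_integral_eq_lintegral_ofReal hf.integrableOn_Icc
          (ae_restrict_of_forall_mem measurableSet_Icc hf_nonneg)).symm
    _ = _ := by
        rw [integral_Icc_eq_integral_Ioc, ← intervalIntegral.integral_of_le hL,
          intervalIntegral.integral_const_mul]

section Simplex

variable {q : ℕ}

def simplexPoint (L : ℝ) (y : Fin q → ℝ) : Fin (q + 1) → ℝ :=
  Fin.snoc y (L - ∑ i, y i)

@[fun_prop]
theorem continuous_simplexPoint (L : ℝ) : Continuous (simplexPoint (q := q) L) :=
  Continuous.finSnoc (A := fun _ => ℝ) continuous_id (by fun_prop)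

theorem sum_simplexPoint (L : ℝ) (y : Fin q → ℝ) : ∑ i, simplexPoint L y i = L := by
  simp [simplexPoint, Fin.sum_univ_castSucc]

theorem simplexPoint_cons (L t : ℝ) (y : Fin q → ℝ) :
    simplexPoint L (Fin.cons t y) = Fin.cons t (simplexPoint (L - t) y) := by
  rw [simplexPoint, simplexPoint, Fin.sum_cons, Fin.cons_snoc_eq_snoc_cons, sub_add_eq_sub_sub]

theorem sum_mul_simplexPoint (a : Fin (q + 1) → ℝ) (L : ℝ) (y : Fin q → ℝ) :
    ∑ i, a i * simplexPoint L y i =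
      ∑ i : Fin q, a i.castSucc * y i + a (Fin.last q) * (L - ∑ i, y i) := by
  simp [simplexPoint, Fin.sum_univ_castSucc]

def simplexRegion (q : ℕ) (L : ℝ) : Set (Fin q → ℝ) := {y | ∀ i, 0 ≤ simplexPoint L y i}

theorem simplexRegion_eq (q : ℕ) (L : ℝ) :
    simplexRegion q L = {y | (∀ i, 0 ≤ y i) ∧ ∑ i, y i ≤ L} := by
  ext y
  simp [simplexRegion, simplexPoint, Fin.forall_fin_succ', sub_nonneg]

theorem measurableSet_simplexRegion (L : ℝ) : MeasurableSet (simplexRegion q L) := by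
  simp only [simplexRegion, ofPred_forall]
  exact MeasurableSet.iInter fun i => measurableSet_le measurable_const
    ((continuous_apply i).comp (continuous_simplexPoint L)).measurable

theorem cons_mem_simplexRegion_iff (L t : ℝ) (y : Fin q → ℝ) :
    Fin.cons t y ∈ simplexRegion (q + 1) L ↔ t ∈ Icc 0 L ∧ y ∈ simplexRegion q (L - t) := by
  simp only [simplexRegion, mem_ofPred_eq, simplexPoint_cons, mem_Icc]
  rw [Fin.forall_fin_succ]
  simp only [Fin.cons_zero, Fin.cons_succ]
  constructor
  · rintro ⟨ht, hy⟩
    have hsum := Finset.sum_nonneg fun i (_ : i ∈ Finset.univ) => hy i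
    rw [sum_simplexPoint] at hsum
    exact ⟨⟨ht, by linarith⟩, hy⟩
  · rintro ⟨⟨ht, -⟩, hy⟩
    exact ⟨ht, hy⟩

noncomputable def simplexDensity (a : Fin (q + 1) → ℝ) (L : ℝ) (y : Fin q → ℝ) : ℝ≥0∞ :=
  ENNReal.ofReal (exp (-∑ i, a i * simplexPoint L y i))

theorem measurable_simplexDensity (a : Fin (q + 1) → ℝ) (L : ℝ) :
    Measurable (simplexDensity a L) := by
  unfold simplexDensity
  fun_prop

theorem simplexDensity_cons (b : ℝ) (a : Fin (q + 1) → ℝ) (L t : ℝ) (y : Fin q → ℝ) :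
    simplexDensity (Fin.cons b a : Fin (q + 2) → ℝ) L (Fin.cons t y) =
      ENNReal.ofReal (exp (-(b * t))) * simplexDensity a (L - t) y := by
  rw [simplexDensity, simplexDensity, simplexPoint_cons, Fin.sum_univ_succ]
  simp only [Fin.cons_zero, Fin.cons_succ, neg_add, exp_add, ENNReal.ofReal_mul (exp_nonneg _)]

noncomputable def simplexLIntegral (a : Fin (q + 1) → ℝ) (L : ℝ) : ℝ≥0∞ :=
  ∫⁻ y in simplexRegion q L, simplexDensity a L y

theorem simplexLIntegral_zero (a : Fin 1 → ℝ) {L : ℝ} (hL : 0 ≤ L) :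
    simplexLIntegral a L = ENNReal.ofReal (exp (-(a 0 * L))) := by
  have hregion : simplexRegion 0 L = univ := by
    ext y
    simp [simplexRegion_eq, hL]
  simp [simplexLIntegral, simplexDensity, hregion, simplexPoint, Fin.snoc, volume_pi]

theorem simplexLIntegral_cons (b : ℝ) (a : Fin (q + 1) → ℝ) (L : ℝ) :
    simplexLIntegral (Fin.cons b a : Fin (q + 2) → ℝ) L =
      ∫⁻ t in Icc 0 L, ENNReal.ofReal (exp (-(b * t))) * simplexLIntegral a (L - t) := by
  have hcons : ∀ t y, (simplexRegion (q + 1) L).indicator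
      (simplexDensity (Fin.cons b a : Fin (q + 2) → ℝ) L) (Fin.cons t y) =
      (Icc 0 L).indicator (fun t => ENNReal.ofReal (exp (-(b * t)))) t *
        (simplexRegion q (L - t)).indicator (simplexDensity a (L - t)) y := by
    intro t y
    by_cases hmem : t ∈ Icc 0 L ∧ y ∈ simplexRegion q (L - t)
    · rw [indicator_of_mem ((cons_mem_simplexRegion_iff L t y).2 hmem), indicator_of_mem hmem.1,
        indicator_of_mem hmem.2, simplexDensity_cons]
    · rw [indicator_of_notMem (mt (cons_mem_simplexRegion_iff L t y).1 hmem)]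
      rcases not_and_or.1 hmem with h | h <;> simp [h]
  have hmeas := (measurable_simplexDensity (Fin.cons b a : Fin (q + 2) → ℝ) L).indicator
    (measurableSet_simplexRegion L)
  rw [simplexLIntegral, ← lintegral_indicator (measurableSet_simplexRegion L),
    ← (volume_preserving_piFinSuccAbove (fun _ : Fin (q + 1) => ℝ) 0).symm.lintegral_comp hmeas,
    Measure.volume_eq_prod, lintegral_prod, ← lintegral_indicator measurableSet_Icc]
  · congr 1 with t
    simp only [MeasurableEquiv.piFinSuccAbove_symm_apply, Fin.insertNthEquiv,
      Fin.insertNth_zero', Equiv.coe_fn_mk, hcons]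
    rw [lintegral_const_mul _
        ((measurable_simplexDensity a _).indicator (measurableSet_simplexRegion _)),
      lintegral_indicator (measurableSet_simplexRegion _), indicator_mul_left]
    rfl
  · exact (hmeas.comp (MeasurableEquiv.measurable _)).aemeasurable

theorem simplexLIntegral_le (a : Fin (q + 1) → ℝ) : ∃ C > 0, ∀ L, 0 ≤ L →
    simplexLIntegral a L ≤
      ENNReal.ofReal (C * (L ^ (minMultiplicity a - 1) * exp (-((⨅ i, a i) * L)))) := by
  induction q with
  | zero =>
    have hinf : ⨅ i, a i = a 0 := ciInf_unique (ι := Fin 1)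
    have hmult : minMultiplicity a = 1 := by
      have huniv : {i | a i = a 0} = univ :=
        eq_univ_of_forall fun i => congrArg a (Fin.fin_one_eq_zero i)
      rw [minMultiplicity, hinf, huniv, ncard_univ, Nat.card_eq_fintype_card, Fintype.card_fin]
    refine ⟨1, one_pos, fun L hL => ?_⟩
    rw [simplexLIntegral_zero a hL, hmult, hinf]
    simp
  | succ q ih =>
    induction a using Fin.consCases with
    | cons b a =>
    rw [Fin.iInf_cons, minMultiplicity_cons]
    obtain ⟨C, hC, hJ⟩ := ih a
    set μ := ⨅ i, a i
    set m := minMultiplicity a - 1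
    have hm : minMultiplicity a = m + 1 := (Nat.succ_pred_eq_of_pos (minMultiplicity_pos a)).symm
    have hconv : ∀ L, 0 ≤ L → simplexLIntegral (Fin.cons b a : Fin (q + 2) → ℝ) L ≤
        ENNReal.ofReal (C * ∫ t in 0..L, exp (-(b * t)) * ((L - t) ^ m * exp (-(μ * (L - t))))) :=
      fun L hL => (simplexLIntegral_cons b a L).trans_le (lintegral_exp_conv_le hC.le hL hJ)
    rcases lt_trichotomy b μ with h | rfl | h
    · refine ⟨C * (m ! / (μ - b) ^ (m + 1)), by positivity, fun L hL => (hconv L hL).trans ?_⟩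
      simp only [h.le, h.not_ge, if_true, if_false, min_eq_left h.le, add_zero, Nat.sub_self,
        pow_zero, one_mul, mul_assoc]
      gcongr
      exact integral_exp_conv_le_of_gt m hL h
    · refine ⟨C, hC, fun L hL => (hconv L hL).trans ?_⟩
      simp only [le_refl, if_true, min_self, hm, Nat.add_sub_cancel_left]
      gcongr
      exact integral_exp_conv_le_of_eq m hL
    · refine ⟨C * (b - μ)⁻¹, by have := sub_pos.2 h; positivity,
        fun L hL => (hconv L hL).trans ?_⟩
      simp only [h.le, h.not_ge, if_true, if_false, min_eq_right h.le, zero_add, mul_assoc]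
      gcongr
      exact integral_exp_conv_le_of_lt m hL h

theorem setIntegral_eq_toReal_simplexLIntegral (a : Fin (q + 1) → ℝ) (L : ℝ) :
    ∫ y in {y : Fin q → ℝ | (∀ i, 0 ≤ y i) ∧ ∑ i, y i ≤ L},
      exp (-∑ i, a i * simplexPoint L y i) = (simplexLIntegral a L).toReal := by
  rw [← simplexRegion_eq, simplexLIntegral,
    integral_eq_lintegral_of_nonneg_ae (ae_of_all _ fun _ => (exp_pos _).le)
      (by fun_prop : Continuous _).aestronglyMeasurable]
  rfl

end Simplex

/-- `∫_{Δ_L} e^{-2 Σ aᵢ yᵢ} dσ ≤ C(a) L^m` for `L ≥ 1`, where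
`Δ_L = {y ∈ ℝ^p_{≥0} : Σ yᵢ = L}` carries its `(p-1)`-dimensional Lebesgue surface
measure and `m = #{i : aᵢ = 0} - 1`.  The simplex is parametrised by its projection to
the first `p - 1` coordinates (`p = q + 1`, last coordinate `L - Σ yᵢ`), the surface
measure being `√p` times the projected Lebesgue measure. -/
theorem simplex_surface_integral_bound (q : ℕ) (a : Fin (q + 1) → ℝ)
    (ha : ∀ i, 0 ≤ a i) (h0 : ∃ i, a i = 0) :
    ∃ C : ℝ, 0 < C ∧ ∀ L : ℝ, 1 ≤ L →
      Real.sqrt (q + 1) *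
        ∫ y in {y : Fin q → ℝ | (∀ i, 0 ≤ y i) ∧ ∑ i, y i ≤ L},
          Real.exp (-2 * ((∑ i : Fin q, a i.castSucc * y i) +
            a (Fin.last q) * (L - ∑ i, y i)))
      ≤ C * L ^ ({i | a i = 0}.ncard - 1) := by
  obtain ⟨C, hC, hJ⟩ := simplexLIntegral_le (fun i => 2 * a i)
  have hmin : ⨅ i, 2 * a i = 0 := by
    obtain ⟨i, hi⟩ := h0
    exact le_antisymm (ciInf_le_of_le (finite_range _).bddBelow i (by simp [hi]))
      (le_ciInf fun i => by linarith [ha i])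
  have hmult : minMultiplicity (fun i => 2 * a i) = {i | a i = 0}.ncard := by
    simp [minMultiplicity, hmin]
  refine ⟨√(q + 1) * C, by positivity, fun L hL => ?_⟩
  have hbound := hJ L (by linarith)
  rw [hmin, hmult, zero_mul, neg_zero, exp_zero, mul_one] at hbound
  have hexponent : ∀ y : Fin q → ℝ,
      -2 * (∑ i : Fin q, a i.castSucc * y i + a (Fin.last q) * (L - ∑ i, y i)) =
        -∑ i, 2 * a i * simplexPoint L y i := by
    intro y
    rw [sum_mul_simplexPoint]
    simp only [mul_assoc, ← Finset.mul_sum]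
    ring
  simp only [hexponent]
  rw [setIntegral_eq_toReal_simplexLIntegral (fun i => 2 * a i), mul_assoc]
  gcongr
  exact ENNReal.toReal_le_of_le_ofReal (by positivity) hbound
end
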